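/- Under the assumptions of the previous statement (D diagonal with positive real entries, x_{ℓ₁} a minimizer of the complex LASSO objective, u = 2 D^{−H} Aᴴ(y − A x_{ℓ₁})), for every m with x_{ℓ₁,m} ≠ 0 the phases agree: u_m / |u_m| = x_{ℓ₁,m} / |x_{ℓ₁,m}|, equivalently arg(u_m) = arg(x_{ℓ₁,m}). -/

import Mathlib

/-!
Perturb only the `m`-th coordinate of the minimizer: `h ↦ ∑ₙ ‖rₙ - Aₙₘ h‖² + μ dₘ ‖xₘ + h‖`,
with `r = y - A x`, is minimal at `h = 0`, and it is differentiable there because `xₘ ≠ 0`.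
Its real gradient at `0` is `μ dₘ xₘ / ‖xₘ‖ - 2 (Aᴴ r)ₘ = dₘ (μ xₘ / ‖xₘ‖ - uₘ)`, so
`uₘ = (μ / ‖xₘ‖) xₘ` is a positive real multiple of `xₘ` and has the same phase.
-/

open ComplexConjugate RealInnerProductSpace Matrix

theorem HasDerivAt.norm {F : Type*} [NormedAddCommGroup F] [InnerProductSpace ℝ F]
    {f : ℝ → F} {f' : F} {x : ℝ} (hf : HasDerivAt f f' x) (h0 : f x ≠ 0) :
    HasDerivAt (fun t => ‖f t‖) (⟪f x, f'⟫ / ‖f x‖) x := by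
  have hsqrt := hf.norm_sq.sqrt (by positivity)
  simp only [Real.sqrt_sq (norm_nonneg _)] at hsqrt
  convert hsqrt using 1
  field_simp

theorem IsLocalMin.eq_zero_of_hasDerivAt_inner {E : Type*} [NormedAddCommGroup E]
    [InnerProductSpace ℝ E] {f : E → ℝ} {x g : E} (hmin : IsLocalMin f x)
    (hf : ∀ v, HasDerivAt (fun t : ℝ => f (x + t • v)) ⟪g, v⟫ 0) : g = 0 := by
  have hline : IsLocalMin (fun t : ℝ => f (x + t • g)) 0 :=
    IsLocalMin.comp_continuous (g := fun t : ℝ => x + t • g) (by simpa using hmin) (by fun_prop)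
  exact inner_self_eq_zero.mp (hline.hasDerivAt_eq_zero (hf g))

theorem Complex.real_inner_mul_right (w a z : ℂ) : ⟪w, a * z⟫ = ⟪conj a * w, z⟫ := by
  simp only [Complex.inner, map_mul, Complex.conj_conj]
  ring_nf

theorem div_norm_eq_of_eq_ofReal_mul {u z : ℂ} {c : ℝ} (hc : 0 < c) (h : u = c * z) :
    u / ‖u‖ = z / ‖z‖ := by
  rcases eq_or_ne z 0 with rfl | hz
  · simp [h]
  have : (c : ℂ) ≠ 0 := by exact_mod_cast hc.ne'
  rw [h, norm_mul, Complex.norm_real, Real.norm_of_nonneg hc.le]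
  push_cast
  field_simp

section Lasso

variable {ι κ : Type*} [Fintype ι] [Fintype κ]

noncomputable def lassoObjective (A : Matrix κ ι ℂ) (y : κ → ℂ) (d : ι → ℝ) (μ : ℝ)
    (x : ι → ℂ) : ℝ :=
  ∑ n, ‖(y - A *ᵥ x) n‖ ^ 2 + μ * ∑ m, d m * ‖x m‖

/-- Up to an additive constant, the LASSO objective along the `m`-th coordinate line through `x`,
with `r` the residual `y - A x`, `a` the `m`-th column of `A`, `c = μ dₘ` and `z = xₘ`. -/
noncomputable def lassoCoordObjective (r a : κ → ℂ) (c : ℝ) (z h : ℂ) : ℝ :=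
  ∑ n, ‖r n - a n * h‖ ^ 2 + c * ‖z + h‖

theorem lassoObjective_add_single_sub [DecidableEq ι] (A : Matrix κ ι ℂ) (y : κ → ℂ)
    (d : ι → ℝ) (μ : ℝ) (x : ι → ℂ) (m : ι) (h : ℂ) :
    lassoObjective A y d μ (x + Pi.single m h) - lassoObjective A y d μ x =
      lassoCoordObjective (y - A *ᵥ x) (A · m) (μ * d m) (x m) h -
        lassoCoordObjective (y - A *ᵥ x) (A · m) (μ * d m) (x m) 0 := by
  have hres : ∀ n, (y - A *ᵥ (x + Pi.single m h)) n = (y - A *ᵥ x) n - A n m * h := by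
    intro n
    simp [mulVec_add, sub_add_eq_sub_sub, mul_comm]
  have hpen : ∑ k, d k * ‖(x + Pi.single m h : ι → ℂ) k‖ - ∑ k, d k * ‖x k‖ =
      d m * ‖x m + h‖ - d m * ‖x m‖ := by
    rw [← Finset.sum_sub_distrib, Finset.sum_eq_single m (fun k _ hk => by simp [hk]) (by simp)]
    simp
  simp only [lassoObjective, lassoCoordObjective, hres, mul_zero, sub_zero, add_zero]
  linear_combination μ * hpen

theorem two_mul_sum_conj_mul_eq_of_isLocalMin_lassoCoordObjective {r a : κ → ℂ} {c : ℝ} {z : ℂ}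
    (hz : z ≠ 0) (hmin : IsLocalMin (lassoCoordObjective r a c z) 0) :
    2 * ∑ n, conj (a n) * r n = ((c / ‖z‖ : ℝ) : ℂ) * z := by
  set g : ℂ := (c / ‖z‖) • z - (2 : ℝ) • ∑ n, conj (a n) * r n
  suffices g = 0 by simpa [Complex.real_smul] using (sub_eq_zero.mp this).symm
  refine hmin.eq_zero_of_hasDerivAt_inner fun v => ?_
  have hline : HasDerivAt (fun t : ℝ => t • v) v 0 := by
    simpa using (hasDerivAt_id (0 : ℝ)).smul_const v
  have hsq := HasDerivAt.fun_sum fun n (_ : n ∈ Finset.univ) =>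
    ((hline.const_mul (a n)).const_sub (r n)).norm_sq
  have hnorm := ((hline.const_add z).norm (by simpa using hz)).const_mul c
  simp only [zero_add, lassoCoordObjective]
  refine (hsq.add hnorm).congr_deriv ?_
  simp only [g, inner_sub_left, real_inner_smul_left, sum_inner, zero_smul, mul_zero, sub_zero,
    add_zero, inner_neg_right, Complex.real_inner_mul_right, mul_neg, Finset.mul_sum,
    Finset.sum_neg_distrib]
  ring

end Lasso

/-- Under the LASSO optimality conditions, the phases of active primal coordinates and
the corresponding dual coordinates agree: `u m / |u m| = x m / |x m|`. -/
theorem stmt_8 (N M : ℕ) (A : Matrix (Fin N) (Fin M) ℂ) (y : Fin N → ℂ)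
    (d : Fin M → ℝ) (hd : ∀ m, 0 < d m) (μ : ℝ) (hμ : 0 < μ)
    (x : Fin M → ℂ)
    (hmin : ∀ x' : Fin M → ℂ,
      (∑ n, ‖(y - A.mulVec x) n‖ ^ 2) + μ * ∑ m, d m * ‖x m‖ ≤
      (∑ n, ‖(y - A.mulVec x') n‖ ^ 2) + μ * ∑ m, d m * ‖x' m‖)
    (u : Fin M → ℂ)
    (hu : ∀ m, u m = (2 / (d m : ℂ)) * A.conjTranspose.mulVec (y - A.mulVec x) m) :
    ∀ m, x m ≠ 0 →
      u m / (‖u m‖ : ℂ) = x m / (‖x m‖ : ℂ) := by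
  intro m hxm
  have hmin' : ∀ x', lassoObjective A y d μ x ≤ lassoObjective A y d μ x' := hmin
  have hstat := two_mul_sum_conj_mul_eq_of_isLocalMin_lassoCoordObjective hxm <|
    Filter.Eventually.of_forall fun h => by
      linarith [hmin' (x + Pi.single m h), lassoObjective_add_single_sub A y d μ x m h]
  have hdm : (d m : ℂ) ≠ 0 := by exact_mod_cast (hd m).ne'
  have hum : u m = ((μ / ‖x m‖ : ℝ) : ℂ) * x m := calc
    u m = (d m : ℂ)⁻¹ * (2 * ∑ n, conj (A n m) * (y - A *ᵥ x) n) := by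
      simp only [hu m, mulVec, dotProduct, conjTranspose_apply, RCLike.star_def]
      ring
    _ = ((μ / ‖x m‖ : ℝ) : ℂ) * x m := by
      rw [hstat]
      push_cast
      field_simp
  exact div_norm_eq_of_eq_ofReal_mul (by positivity) hum
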